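/- arXiv:1708.02457 — 3 statements merged into one kernel-verified Lean document; each statement's English description precedes it below -/
import Mathlib

section
/- Let V be a nonempty finite set, c : V → ℕ, χ = Σ_{i∈V} c_i, and let p ≥ 1 be an integer with χ > p. For a tuple (i₁,…,i_p) ∈ V^p, let δ_k = #{ j < k : i_j = i_k } for 1 ≤ k ≤ p, and define Z_{i₁…i_p} = (c_{i₁}·c_{i₂}⋯c_{i_p})/χ^p − (∏_{k=1}^p (c_{i_k} − δ_k)) / (χ·(χ−1)⋯(χ−(p−1))). Then Σ_{(i₁,…,i_p)∈V^p} |Z_{i₁…i_p}| ≤ 2·Σ_{k=1}^{p−1} k/(χ−k) ≤ 2p²/(χ−p). -/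
open Finset

set_option linter.unusedSectionVars false

namespace BoundZAux

variable {V : Type*} [Fintype V] [DecidableEq V]

def dlt (q : ℕ) (i : Fin q → V) (k : Fin q) : ℕ :=
  (Finset.univ.filter (fun j : Fin q => j < k ∧ i j = i k)).card

def cnt (q : ℕ) (i : Fin q → V) (v : V) : ℕ :=
  (Finset.univ.filter (fun j : Fin q => i j = v)).card

lemma dlt_snoc_castSucc (q : ℕ) (i : Fin q → V) (v : V) (k : Fin q) :
    dlt (q+1) (Fin.snoc i v) k.castSucc = dlt q i k := by
  simp only [dlt, Finset.card_filter]
  rw [Fin.sum_univ_castSucc]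
  simp [Fin.castSucc_lt_castSucc_iff, (Fin.castSucc_lt_last k).not_gt]

lemma dlt_snoc_last (q : ℕ) (i : Fin q → V) (v : V) :
    dlt (q+1) (Fin.snoc i v) (Fin.last q) = cnt q i v := by
  simp only [dlt, cnt, Finset.card_filter]
  rw [Fin.sum_univ_castSucc]
  simp [Fin.castSucc_lt_last]

lemma cnt_snoc (q : ℕ) (i : Fin q → V) (v w : V) :
    cnt (q+1) (Fin.snoc i v) w = cnt q i w + if v = w then 1 else 0 := by
  simp only [cnt, Finset.card_filter]
  rw [Fin.sum_univ_castSucc]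
  simp

lemma sum_cnt (q : ℕ) (i : Fin q → V) : ∑ v, cnt q i v = q := by
  simp only [cnt, Finset.card_filter]
  rw [Finset.sum_comm]
  simp

lemma sum_snoc {M : Type*} [AddCommMonoid M] (q : ℕ) (F : (Fin (q+1) → V) → M) :
    ∑ j : Fin (q+1) → V, F j = ∑ i : Fin q → V, ∑ v : V, F (Fin.snoc i v) := by
  rw [← (Fin.snocEquiv (fun _ => V)).sum_comp F, Fintype.sum_prod_type]
  rw [Finset.sum_comm]
  simp [Fin.snocEquiv]

variable (c : V → ℕ)

def An (q : ℕ) (i : Fin q → V) : ℝ := ∏ k, (c (i k) : ℝ)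

def Bn (q : ℕ) (i : Fin q → V) : ℝ := ∏ k, ((c (i k) : ℝ) - (dlt q i k : ℝ))

lemma An_nonneg (q : ℕ) (i : Fin q → V) : 0 ≤ An c q i :=
  Finset.prod_nonneg fun k _ => by positivity

lemma An_snoc (q : ℕ) (i : Fin q → V) (v : V) :
    An c (q+1) (Fin.snoc i v) = An c q i * c v := by
  rw [An, Fin.prod_univ_castSucc]
  simp [An]

lemma Bn_snoc (q : ℕ) (i : Fin q → V) (v : V) :
    Bn c (q+1) (Fin.snoc i v) = Bn c q i * ((c v : ℝ) - cnt q i v) := by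
  rw [Bn, Fin.prod_univ_castSucc]
  simp [Bn, dlt_snoc_castSucc, dlt_snoc_last]

lemma Bn_props : ∀ (q : ℕ) (i : Fin q → V),
    0 ≤ Bn c q i ∧ ∀ v, c v < cnt q i v → Bn c q i = 0 := by
  intro q
  induction q with
  | zero =>
    intro i
    refine ⟨by simp [Bn], fun v h => ?_⟩
    simp [cnt] at h
  | succ q ih =>
    intro i
    induction i using Fin.snocCases with
    | snoc i v =>
      obtain ⟨h1, h2⟩ := ih i
      rw [Bn_snoc]
      by_cases hz : ∃ w, c w < cnt q i w
      · obtain ⟨w, hw⟩ := hz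
        rw [h2 w hw, zero_mul]
        exact ⟨le_refl _, fun _ _ => rfl⟩
      · push_neg at hz
        have hv : (0:ℝ) ≤ (c v : ℝ) - cnt q i v := by
          have := hz v
          have : (cnt q i v : ℝ) ≤ c v := by exact_mod_cast this
          linarith
        refine ⟨mul_nonneg h1 hv, fun w hw => ?_⟩
        rw [cnt_snoc] at hw
        by_cases hvw : v = w
        · subst hvw
          have hw' : c v < cnt q i v + 1 := by simpa using hw
          have hcw : cnt q i v = c v := le_antisymm (hz v) (by omega)
          rw [hcw]
          simp
        · simp [hvw] at hw
          exact absurd hw (not_lt.2 (hz w))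

lemma sum_An (q : ℕ) : ∑ i : Fin q → V, An c q i = (∑ v, (c v : ℝ)) ^ q := by
  simp only [An]
  rw [Finset.sum_pow' Finset.univ (fun v => (c v : ℝ)) q, Fintype.piFinset_univ]

lemma den_succ (X : ℝ) (q : ℕ) :
    ∏ k : Fin (q+1), (X - ((k : ℕ) : ℝ)) = (∏ k : Fin q, (X - ((k : ℕ) : ℝ))) * (X - q) := by
  rw [Fin.prod_univ_castSucc]
  simp

lemma prefix_bound (χ : ℕ) (q : ℕ) (hq : q < χ) (hχc : ((χ:ℕ) : ℝ) = ∑ v, (c v : ℝ))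
    (i : Fin q → V) :
    ∑ v : V, |An c q i / (χ:ℝ)^q * ((c v : ℝ)/(χ:ℝ))
        - Bn c q i / (∏ k : Fin q, ((χ:ℝ) - ((k:ℕ):ℝ))) * (((c v : ℝ) - cnt q i v)/((χ:ℝ) - q))|
      ≤ An c q i / (χ:ℝ)^q * (2*q/((χ:ℝ) - q))
        + |An c q i / (χ:ℝ)^q - Bn c q i / (∏ k : Fin q, ((χ:ℝ) - ((k:ℕ):ℝ)))| := by
  have hX0 : (0:ℝ) < χ := by
    have : 0 < χ := lt_of_le_of_lt (Nat.zero_le q) hq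
    exact_mod_cast this
  have hXq : (0:ℝ) < (χ:ℝ) - q := by
    have : (q:ℝ) < χ := by exact_mod_cast hq
    linarith
  have hD : (0:ℝ) < ∏ k : Fin q, ((χ:ℝ) - ((k:ℕ):ℝ)) := by
    apply Finset.prod_pos
    intro k _
    have : ((k:ℕ):ℝ) < χ := by exact_mod_cast lt_trans k.isLt hq
    linarith
  set P := An c q i / (χ:ℝ)^q with hPdef
  set Q := Bn c q i / (∏ k : Fin q, ((χ:ℝ) - ((k:ℕ):ℝ))) with hQdef
  have hP : 0 ≤ P := div_nonneg (An_nonneg c q i) (by positivity)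
  have hsc : ∑ v, (c v : ℝ) = (χ:ℝ) := hχc.symm
  have hscnt : ∑ v, (cnt q i v : ℝ) = (q:ℝ) := by
    have := sum_cnt q i
    exact_mod_cast congrArg (fun n : ℕ => (n:ℝ)) this
  by_cases hB : Bn c q i = 0
  · have hQ0 : Q = 0 := by rw [hQdef, hB, zero_div]
    rw [hQ0]
    simp only [zero_mul, sub_zero]
    have hsum : ∑ v, |P * ((c v:ℝ)/(χ:ℝ))| = P := by
      have h1 : ∀ v ∈ Finset.univ, |P * ((c v:ℝ)/(χ:ℝ))| = P * ((c v:ℝ)/(χ:ℝ)) := fun v _ =>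
        abs_of_nonneg (mul_nonneg hP (div_nonneg (by positivity) hX0.le))
      rw [Finset.sum_congr rfl h1, ← Finset.mul_sum, ← Finset.sum_div, hsc,
        div_self hX0.ne', mul_one]
    rw [hsum, abs_of_nonneg hP]
    have ht : 0 ≤ P * (2*q/((χ:ℝ)-q)) := mul_nonneg hP (by positivity)
    linarith
  · have hcnt : ∀ v, (cnt q i v : ℝ) ≤ (c v : ℝ) := by
      intro v
      have h2 : ¬ (c v < cnt q i v) := fun h => hB ((Bn_props c q i).2 v h)
      exact_mod_cast not_lt.1 h2
    calc ∑ v, |P * ((c v:ℝ)/(χ:ℝ)) - Q * (((c v:ℝ) - cnt q i v)/((χ:ℝ) - q))|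
        ≤ ∑ v, (P * (((c v:ℝ)/((χ:ℝ)-q) - (c v:ℝ)/(χ:ℝ)) + (cnt q i v:ℝ)/((χ:ℝ)-q))
              + |P - Q| * (((c v:ℝ) - cnt q i v)/((χ:ℝ)-q))) := by
          apply Finset.sum_le_sum
          intro v _
          have hb : 0 ≤ ((c v:ℝ) - cnt q i v)/((χ:ℝ)-q) :=
            div_nonneg (by linarith [hcnt v]) hXq.le
          have key : P * ((c v:ℝ)/(χ:ℝ)) - Q * (((c v:ℝ) - cnt q i v)/((χ:ℝ)-q))
              = P * ((c v:ℝ)/(χ:ℝ) - ((c v:ℝ) - cnt q i v)/((χ:ℝ)-q))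
                + (P - Q) * (((c v:ℝ) - cnt q i v)/((χ:ℝ)-q)) := by ring
          rw [key]
          refine le_trans (abs_add_le _ _) ?_
          rw [abs_mul, abs_mul, abs_of_nonneg hP, abs_of_nonneg hb]
          have habs : |(c v:ℝ)/(χ:ℝ) - ((c v:ℝ) - cnt q i v)/((χ:ℝ)-q)|
              ≤ ((c v:ℝ)/((χ:ℝ)-q) - (c v:ℝ)/(χ:ℝ)) + (cnt q i v:ℝ)/((χ:ℝ)-q) := by
            have e : (c v:ℝ)/(χ:ℝ) - ((c v:ℝ) - cnt q i v)/((χ:ℝ)-q)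
                = ((c v:ℝ)/(χ:ℝ) - (c v:ℝ)/((χ:ℝ)-q)) + (cnt q i v:ℝ)/((χ:ℝ)-q) := by
              field_simp
              ring
            rw [e]
            refine le_trans (abs_add_le _ _) ?_
            have hmono : (c v:ℝ)/(χ:ℝ) ≤ (c v:ℝ)/((χ:ℝ)-q) :=
              div_le_div_of_nonneg_left (by positivity) hXq (by linarith)
            have h1 : |(c v:ℝ)/(χ:ℝ) - (c v:ℝ)/((χ:ℝ)-q)|
                = (c v:ℝ)/((χ:ℝ)-q) - (c v:ℝ)/(χ:ℝ) := by
              rw [abs_sub_comm]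
              exact abs_of_nonneg (by linarith)
            rw [h1, abs_of_nonneg (by positivity : (0:ℝ) ≤ (cnt q i v:ℝ)/((χ:ℝ)-q))]
          exact add_le_add_left (mul_le_mul_of_nonneg_left habs hP) _
      _ = P * (2*q/((χ:ℝ)-q)) + |P - Q| * 1 := by
          rw [Finset.sum_add_distrib, ← Finset.mul_sum, ← Finset.mul_sum]
          congr 1
          · congr 1
            rw [Finset.sum_add_distrib, Finset.sum_sub_distrib, ← Finset.sum_div,
              ← Finset.sum_div, ← Finset.sum_div, hsc, hscnt]
            field_simp
            ring
          · congr 1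
            rw [← Finset.sum_div, Finset.sum_sub_distrib, hsc, hscnt, div_self hXq.ne']
      _ = P * (2*q/((χ:ℝ)-q)) + |P - Q| := by rw [mul_one]

lemma key (χ : ℕ) (hχc : ((χ:ℕ):ℝ) = ∑ v, (c v : ℝ)) :
    ∀ q : ℕ, q ≤ χ →
      ∑ i : Fin q → V, |An c q i / (χ:ℝ)^q
          - Bn c q i / ∏ k : Fin q, ((χ:ℝ) - ((k:ℕ):ℝ))|
        ≤ 2 * ∑ k ∈ Finset.range q, (k:ℝ)/((χ:ℝ) - k) := by
  intro q
  induction q with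
  | zero => intro _; simp [An, Bn]
  | succ q ih =>
    intro hq1
    have hq : q < χ := hq1
    have hX0 : (0:ℝ) < χ := by
      have : 0 < χ := lt_of_le_of_lt (Nat.zero_le q) hq
      exact_mod_cast this
    have hXq : (0:ℝ) < (χ:ℝ) - q := by
      have : (q:ℝ) < χ := by exact_mod_cast hq
      linarith
    have hD : (0:ℝ) < ∏ k : Fin q, ((χ:ℝ) - ((k:ℕ):ℝ)) := by
      apply Finset.prod_pos
      intro k _
      have : ((k:ℕ):ℝ) < χ := by exact_mod_cast lt_trans k.isLt hq
      linarith
    calc ∑ j : Fin (q+1) → V, |An c (q+1) j / (χ:ℝ)^(q+1)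
            - Bn c (q+1) j / ∏ k : Fin (q+1), ((χ:ℝ) - ((k:ℕ):ℝ))|
        = ∑ i : Fin q → V, ∑ v : V,
            |An c q i / (χ:ℝ)^q * ((c v:ℝ)/(χ:ℝ))
              - Bn c q i / (∏ k : Fin q, ((χ:ℝ) - ((k:ℕ):ℝ)))
                * (((c v:ℝ) - cnt q i v)/((χ:ℝ) - q))| := by
          rw [sum_snoc]
          refine Finset.sum_congr rfl fun i _ => Finset.sum_congr rfl fun v _ => ?_
          rw [An_snoc, Bn_snoc, den_succ, pow_succ]
          congr 1
          field_simp
      _ ≤ ∑ i : Fin q → V, (An c q i / (χ:ℝ)^q * (2*q/((χ:ℝ)-q))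
            + |An c q i / (χ:ℝ)^q - Bn c q i / (∏ k : Fin q, ((χ:ℝ) - ((k:ℕ):ℝ)))|) :=
          Finset.sum_le_sum fun i _ => prefix_bound c χ q hq hχc i
      _ = 2*q/((χ:ℝ)-q) + ∑ i : Fin q → V,
            |An c q i / (χ:ℝ)^q - Bn c q i / (∏ k : Fin q, ((χ:ℝ) - ((k:ℕ):ℝ)))| := by
          rw [Finset.sum_add_distrib]
          congr 1
          rw [← Finset.sum_mul, ← Finset.sum_div, sum_An, ← hχc,
            div_self (by positivity : ((χ:ℝ)^q) ≠ 0), one_mul]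
      _ ≤ 2*q/((χ:ℝ)-q) + 2 * ∑ k ∈ Finset.range q, (k:ℝ)/((χ:ℝ) - k) :=
          add_le_add_right (ih (le_of_lt hq)) _
      _ = 2 * ∑ k ∈ Finset.range (q+1), (k:ℝ)/((χ:ℝ) - k) := by
          rw [Finset.sum_range_succ]
          ring

end BoundZAux

/-- Lemma 2 (boundZ) of the paper: for half-edge counts `c : V → ℕ` with total `χ = Σ c i`
and `1 ≤ p < χ`, the total variation error between independent sampling and sampling
without replacement of `p` half-edges satisfies
`Σ_{(i₁,…,i_p)} |Z_{i₁…i_p}| ≤ 2 Σ_{k=1}^{p-1} k/(χ-k) ≤ 2p²/(χ-p)`. -/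
theorem stmt_2 {V : Type*} [Fintype V] [Nonempty V] [DecidableEq V]
    (c : V → ℕ) (p : ℕ) (hp : 1 ≤ p) (χ : ℕ) (hχ : χ = ∑ i, c i) (hpχ : p < χ) :
    let δ : (Fin p → V) → Fin p → ℕ :=
      fun i k => (Finset.univ.filter (fun j : Fin p => j < k ∧ i j = i k)).card
    let Z : (Fin p → V) → ℝ :=
      fun i => (∏ k, (c (i k) : ℝ)) / (χ : ℝ) ^ p
        - (∏ k, ((c (i k) : ℝ) - (δ i k : ℝ))) / (∏ k : Fin p, ((χ : ℝ) - (k : ℕ)))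
    (∑ i : Fin p → V, |Z i|) ≤ 2 * ∑ k ∈ Finset.Icc 1 (p - 1), (k : ℝ) / ((χ : ℝ) - k)
      ∧ 2 * (∑ k ∈ Finset.Icc 1 (p - 1), (k : ℝ) / ((χ : ℝ) - k))
          ≤ 2 * (p : ℝ) ^ 2 / ((χ : ℝ) - p) := by
  intro δ Z
  have hχc : ((χ:ℕ):ℝ) = ∑ v, (c v : ℝ) := by
    rw [hχ]
    push_cast
    rfl
  have hXp : (0:ℝ) < (χ:ℝ) - p := by
    have : (p:ℝ) < χ := by exact_mod_cast hpχ
    linarith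
  constructor
  · have h := BoundZAux.key c χ hχc p (le_of_lt hpχ)
    have hsub : Finset.Icc 1 (p-1) ⊆ Finset.range p := by
      intro k hk
      simp only [Finset.mem_Icc] at hk
      simp only [Finset.mem_range]
      omega
    have hr : ∑ k ∈ Finset.range p, (k:ℝ)/((χ:ℝ)-k)
        = ∑ k ∈ Finset.Icc 1 (p-1), (k:ℝ)/((χ:ℝ)-k) := by
      refine (Finset.sum_subset hsub fun k hk hk' => ?_).symm
      have hk0 : k = 0 := by
        simp only [Finset.mem_range] at hk
        simp only [Finset.mem_Icc] at hk'
        omega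
      subst hk0
      simp
    rw [← hr]
    exact h
  · have hd : (0:ℝ) ≤ (p:ℝ)/((χ:ℝ)-p) := div_nonneg (by positivity) hXp.le
    calc 2 * ∑ k ∈ Finset.Icc 1 (p-1), (k:ℝ)/((χ:ℝ)-k)
        ≤ 2 * ∑ _k ∈ Finset.Icc 1 (p-1), (p:ℝ)/((χ:ℝ)-p) := by
          have : ∀ k ∈ Finset.Icc 1 (p-1), (k:ℝ)/((χ:ℝ)-k) ≤ (p:ℝ)/((χ:ℝ)-p) := by
            intro k hk
            simp only [Finset.mem_Icc] at hk
            have hkp : (k:ℝ) ≤ (p:ℝ) := by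
              have : k ≤ p := by omega
              exact_mod_cast this
            exact div_le_div₀ (by positivity) hkp hXp (by linarith)
          have := Finset.sum_le_sum this
          linarith
      _ ≤ 2 * (p:ℝ)^2 / ((χ:ℝ)-p) := by
          rw [Finset.sum_const, nsmul_eq_mul]
          have h1 : (((Finset.Icc 1 (p-1)).card : ℕ):ℝ) ≤ (p:ℝ) := by
            have : (Finset.Icc 1 (p-1)).card ≤ p := by
              rw [Nat.card_Icc]
              omega
            exact_mod_cast this
          have e : 2*(p:ℝ)^2/((χ:ℝ)-p) = 2*((p:ℝ) * ((p:ℝ)/((χ:ℝ)-p))) := by ring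
          rw [e]
          have := mul_le_mul_of_nonneg_right h1 hd
          linarith
end

section
/- Let q ≥ 2 and τ ≥ 1 be integers, δ > 0 a real number, and S = τ + 2δ. Let X₁, X₂, … be i.i.d. random variables with ℙ(X₁ = 1) = 1/q = 1 − ℙ(X₁ = 0). For 0 ≤ s ≤ τ set E^s = Σ_{k=1}^s X_k and C_s = q·E^s + (τ − s), and let T = min{ s ∈ {0,…,τ} : |C_s − τ| ≥ δ }, with T = τ if no such s ≤ τ−1 exists. Then 𝔼[ |E^{τ∧T} − ⌊S/q⌋| ] + 𝔼[ (τ − T)·1_{T < τ} ] ≤ 6·S·exp( −δ² / (2·τ·q²) ) + 3δ/q + 2. -/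
open MeasureTheory ProbabilityTheory

namespace Stmt7Aux

open Finset



variable {Ω : Type*} [MeasurableSpace Ω] {μ : Measure Ω} [IsProbabilityMeasure μ]

lemma abs_sub_le_max {a b : ℝ} (ha : 0 ≤ a) (hb : 0 ≤ b) : |a - b| ≤ max a b := by
  rw [abs_sub_le_iff]
  constructor
  · have : a ≤ max a b := le_max_left a b
    linarith
  · have : b ≤ max a b := le_max_right a b
    linarith

lemma integral_two_point {Y : Ω → ℝ} (hY : Measurable Y) {p : ℝ} (hp0 : 0 ≤ p) (hp1 : p ≤ 1)
    (h1 : μ {ω | Y ω = 1} = ENNReal.ofReal p) (h0 : μ {ω | Y ω = 0} = ENNReal.ofReal (1 - p))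
    (g : ℝ → ℝ) : ∫ ω, g (Y ω) ∂μ = p * g 1 + (1 - p) * g 0 := by
  set A : Set Ω := {ω | Y ω = 1} with hA_def
  set B : Set Ω := {ω | Y ω = 0} with hB_def
  have hA : MeasurableSet A := by
    have : A = Y ⁻¹' {1} := by ext ω; simp [hA_def]
    rw [this]; exact hY (measurableSet_singleton 1)
  have hB : MeasurableSet B := by
    have : B = Y ⁻¹' {0} := by ext ω; simp [hB_def]
    rw [this]; exact hY (measurableSet_singleton 0)
  have hdisj : Disjoint A B := by
    rw [Set.disjoint_left]
    intro ω h1' h0'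
    simp only [hA_def, hB_def, Set.mem_setOf_eq] at h1' h0'
    rw [h1'] at h0'; norm_num at h0'
  have hunion : μ (A ∪ B) = 1 := by
    rw [measure_union hdisj hB, h1, h0, ← ENNReal.ofReal_add hp0 (by linarith)]
    norm_num
  have hcompl : μ (A ∪ B)ᶜ = 0 := by
    rw [measure_compl (hA.union hB) (measure_ne_top _ _), hunion, measure_univ]
    simp
  have heq : (fun ω => g (Y ω)) =ᵐ[μ]
      (fun ω => A.indicator (fun _ => g 1) ω + B.indicator (fun _ => g 0) ω) := by
    rw [Filter.EventuallyEq, ae_iff]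
    refine measure_mono_null ?_ hcompl
    intro ω hω
    simp only [Set.mem_setOf_eq] at hω
    simp only [Set.mem_compl_iff, Set.mem_union]
    rintro (h | h)
    · apply hω
      have hB' : ω ∉ B := by
        simp only [hB_def, Set.mem_setOf_eq, hA_def] at h ⊢
        rw [h]; norm_num
      rw [Set.indicator_of_mem h, Set.indicator_of_notMem hB']
      simp only [hA_def, Set.mem_setOf_eq] at h
      rw [h]; ring
    · apply hω
      have hA' : ω ∉ A := by
        simp only [hB_def, Set.mem_setOf_eq, hA_def] at h ⊢
        rw [h]; norm_num
      rw [Set.indicator_of_mem h, Set.indicator_of_notMem hA']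
      simp only [hB_def, Set.mem_setOf_eq] at h
      rw [h]; ring
  rw [integral_congr_ae heq, integral_add ((integrable_const (g 1)).indicator hA)
    ((integrable_const (g 0)).indicator hB), integral_indicator_const _ hA,
    integral_indicator_const _ hB, measureReal_def, measureReal_def, h1, h0, ENNReal.toReal_ofReal hp0,
    ENNReal.toReal_ofReal (by linarith)]
  simp [smul_eq_mul]

lemma measurable_comp_nat {T : Ω → ℕ} (hT : Measurable T) {F : ℕ → Ω → ℝ}
    (hF : ∀ n, Measurable (F n)) : Measurable fun ω => F (T ω) ω := by
  have h : Measurable fun p : Ω × ℕ => F p.2 p.1 :=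
    measurable_from_prod_countable_left fun n => hF n
  exact h.comp (measurable_id.prodMk hT)



lemma ae_two_point {Y : Ω → ℝ} (hY : Measurable Y) {p : ℝ} (hp0 : 0 ≤ p) (hp1 : p ≤ 1)
    (h1 : μ {ω | Y ω = 1} = ENNReal.ofReal p) (h0 : μ {ω | Y ω = 0} = ENNReal.ofReal (1 - p)) :
    ∀ᵐ ω ∂μ, Y ω = 1 ∨ Y ω = 0 := by
  set A : Set Ω := {ω | Y ω = 1} with hA_def
  set B : Set Ω := {ω | Y ω = 0} with hB_def
  have hA : MeasurableSet A := by
    have : A = Y ⁻¹' {1} := by ext ω; simp [hA_def]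
    rw [this]; exact hY (measurableSet_singleton 1)
  have hB : MeasurableSet B := by
    have : B = Y ⁻¹' {0} := by ext ω; simp [hB_def]
    rw [this]; exact hY (measurableSet_singleton 0)
  have hdisj : Disjoint A B := by
    rw [Set.disjoint_left]
    intro ω h1' h0'
    simp only [hA_def, hB_def, Set.mem_setOf_eq] at h1' h0'
    rw [h1'] at h0'; norm_num at h0'
  have hunion : μ (A ∪ B) = 1 := by
    rw [measure_union hdisj hB, h1, h0, ← ENNReal.ofReal_add hp0 (by linarith)]
    norm_num
  have hcompl : μ (A ∪ B)ᶜ = 0 := by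
    rw [measure_compl (hA.union hB) (measure_ne_top _ _), hunion, measure_univ]
    simp
  rw [ae_iff]
  refine measure_mono_null ?_ hcompl
  intro ω hω
  simp only [Set.mem_setOf_eq, not_or] at hω
  simp only [Set.mem_compl_iff, Set.mem_union, hA_def, hB_def, Set.mem_setOf_eq]
  tauto

/-- `exp x ≤ 1 + x + x²` for `|x| ≤ 1`. -/
lemma exp_le_quadratic {x : ℝ} (hx : |x| ≤ 1) : Real.exp x ≤ 1 + x + x ^ 2 := by
  have h := Real.exp_bound hx (by norm_num : 0 < 2)
  have h2 : ∑ i ∈ range 2, x ^ i / (Nat.factorial i) = 1 + x := by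
    simp [Finset.sum_range_succ]
  rw [h2] at h
  have h3 := (abs_le.1 h).2
  have h4 : |x| ^ 2 = x ^ 2 := sq_abs x
  rw [h4] at h3
  have h5 : ((Nat.succ 2 : ℕ) : ℝ) / ((Nat.factorial 2 : ℕ) * (2:ℕ)) = 3 / 4 := by
    norm_num [Nat.factorial]
  nlinarith [sq_nonneg x, h5]

/-- extension of a function on a finset by 0 -/
def ext (s : Finset ℕ) (v : {x // x ∈ s} → ℝ) (k : ℕ) : ℝ :=
  if h : k ∈ s then v ⟨k, h⟩ else 0

lemma measurable_ext (s : Finset ℕ) (k : ℕ) : Measurable fun v : {x // x ∈ s} → ℝ => ext s v k := by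
  unfold ext
  by_cases h : k ∈ s
  · simp only [h, dif_pos]
    exact measurable_pi_apply _
  · simp only [h, dif_neg, not_false_iff]
    exact measurable_const

omit [MeasurableSpace Ω] in
lemma ext_restrict (s : Finset ℕ) (X : ℕ → Ω → ℝ) (ω : Ω) {k : ℕ} (hk : k ∈ s) :
    ext s (fun j : {x // x ∈ s} => X j ω) k = X k ω := by
  unfold ext; rw [dif_pos hk]

/-- the `l`-scaled walk -/
def wk {Ω : Type*} (q : ℕ) (X : ℕ → Ω → ℝ) (l : ℝ) (s : ℕ) (ω : Ω) : ℝ :=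
  ∑ k ∈ Finset.Icc 1 s, (l * ((q : ℝ) * X k ω - 1))

lemma wk_meas (q : ℕ) {X : ℕ → Ω → ℝ} (hmeas : ∀ k, Measurable (X k)) (l : ℝ) (s : ℕ) :
    Measurable (wk q X l s) :=
  Finset.measurable_sum _ fun k _ => (((hmeas k).const_mul _).sub measurable_const).const_mul l



lemma maximal_chernoff (q τ : ℕ) (hq : 2 ≤ q) {X : ℕ → Ω → ℝ}
    (hmeas : ∀ k, Measurable (X k))
    (hindep : iIndepFun X μ)
    (hone : ∀ k, μ {ω | X k ω = 1} = ENNReal.ofReal (1 / q))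
    (hzero : ∀ k, μ {ω | X k ω = 0} = ENNReal.ofReal (1 - 1 / q))
    {a l : ℝ} (ha : 0 < a) (hl : |l| ≤ 1 / q) :
    (μ {ω | ∃ s, s ≤ τ ∧ a ≤ wk q X l s ω}).toReal ≤
      Real.exp (-a + τ * (l ^ 2 * ((q : ℝ) - 1))) := by
  have hq1 : (1 : ℝ) ≤ q := by exact_mod_cast hq.trans' (by norm_num)
  have hq0 : (0 : ℝ) < q := by linarith
  have hp0 : (0 : ℝ) ≤ 1 / q := by positivity
  have hp1 : (1 : ℝ) / q ≤ 1 := by rw [div_le_one hq0]; exact hq1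
  set Z : ℕ → Ω → ℝ := fun k ω => Real.exp (l * ((q : ℝ) * X k ω - 1)) with hZdef
  have hZmeas : ∀ k, Measurable (Z k) := fun k =>
    Real.measurable_exp.comp ((((hmeas k).const_mul _).sub measurable_const).const_mul l)
  -- the one-step mgf
  set mg : ℝ := (1 / q) * Real.exp (l * ((q : ℝ) - 1)) + (1 - 1 / q) * Real.exp (-l) with hmgdef
  have hmgf : ∀ k, ∫ ω, Z k ω ∂μ = mg := by
    intro k
    have h := integral_two_point (hmeas k) hp0 hp1 (hone k) (hzero k)
      (fun x => Real.exp (l * ((q : ℝ) * x - 1)))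
    rw [hmgdef]
    convert h using 3 <;> norm_num
  have hmg1 : (1 : ℝ) ≤ mg := by
    have hb0 : (0:ℝ) ≤ 1 - 1/(q:ℝ) := by linarith
    have hab : (1:ℝ)/(q:ℝ) + (1 - 1/(q:ℝ)) = 1 := by ring
    have h := convexOn_exp.2 (Set.mem_univ (l * ((q : ℝ) - 1))) (Set.mem_univ (-l)) hp0 hb0 hab
    have harg : (1/(q:ℝ)) • (l * ((q:ℝ) - 1)) + (1 - 1/(q:ℝ)) • (-l) = 0 := by
      rw [smul_eq_mul, smul_eq_mul]
      field_simp
      ring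
    rw [harg, Real.exp_zero] at h
    rw [hmgdef]
    simpa [smul_eq_mul, one_div] using h
  have hmg2 : mg ≤ Real.exp (l ^ 2 * ((q : ℝ) - 1)) := by
    have hlq : |l| * (q : ℝ) ≤ 1 := by
      rw [← le_div_iff₀ hq0]; exact hl
    have h1 : |l * ((q : ℝ) - 1)| ≤ 1 := by
      rw [abs_mul, abs_of_nonneg (by linarith : (0:ℝ) ≤ (q:ℝ) - 1)]
      nlinarith [abs_nonneg l]
    have h2 : |(-l)| ≤ 1 := by
      rw [abs_neg]; nlinarith [abs_nonneg l]
    have e1 := exp_le_quadratic h1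
    have e2 := exp_le_quadratic h2
    have key : mg ≤ 1 + l ^ 2 * ((q : ℝ) - 1) := by
      rw [hmgdef]
      have expand : (1 / (q:ℝ)) * (1 + l * ((q : ℝ) - 1) + (l * ((q : ℝ) - 1)) ^ 2)
          + (1 - 1 / q) * (1 + (-l) + (-l) ^ 2) = 1 + l ^ 2 * ((q : ℝ) - 1) := by
        field_simp; ring
      have t1 : (0:ℝ) ≤ 1 / q := hp0
      have t2 : (0:ℝ) ≤ 1 - 1 / q := by linarith
      nlinarith [mul_le_mul_of_nonneg_left e1 t1, mul_le_mul_of_nonneg_left e2 t2]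
    exact key.trans (by nlinarith [Real.add_one_le_exp (l ^ 2 * ((q : ℝ) - 1))])
  -- a.e. the X's take values 0 or 1
  have hae : ∀ᵐ ω ∂μ, ∀ k, X k ω = 1 ∨ X k ω = 0 :=
    ae_all_iff.2 fun k => ae_two_point (hmeas k) hp0 hp1 (hone k) (hzero k)
  set B : ℝ := Real.exp (|l| * q) with hBdef
  have hB1 : (1:ℝ) ≤ B := by
    rw [hBdef, ← Real.exp_zero]; apply Real.exp_le_exp.2; positivity
  have hZbd : ∀ᵐ ω ∂μ, ∀ k, Z k ω ≤ B := by
    filter_upwards [hae] with ω hω k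
    rcases hω k with h | h <;> rw [hZdef] <;> simp only [h] <;>
      apply Real.exp_le_exp.2
    · have : l * ((q:ℝ) * 1 - 1) ≤ |l| * ((q:ℝ) - 1) := by
        rw [mul_one]
        calc l * ((q:ℝ) - 1) ≤ |l * ((q:ℝ) - 1)| := le_abs_self _
          _ = |l| * ((q:ℝ) - 1) := by rw [abs_mul, abs_of_nonneg (by linarith : (0:ℝ) ≤ (q:ℝ)-1)]
      nlinarith [abs_nonneg l]
    · have : l * ((q:ℝ) * 0 - 1) = -l := by ring
      rw [this]
      calc -l ≤ |l| := neg_le_abs l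
        _ ≤ |l| * q := by nlinarith [abs_nonneg l]
  have hZint : ∀ k, Integrable (Z k) μ := by
    intro k
    apply Integrable.mono' (integrable_const B) (hZmeas k).aestronglyMeasurable
    filter_upwards [hZbd] with ω hω
    rw [Real.norm_eq_abs, abs_of_pos (Real.exp_pos _)]
    exact hω k
  have hprodint : ∀ s : Finset ℕ, Integrable (fun ω => ∏ k ∈ s, Z k ω) μ := by
    intro s
    apply Integrable.mono' (integrable_const (B ^ s.card))
    · exact (Finset.measurable_prod _ fun k _ => hZmeas k).aestronglyMeasurable
    · filter_upwards [hZbd] with ω hω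
      rw [Real.norm_eq_abs, abs_of_pos (Finset.prod_pos fun k _ => Real.exp_pos _)]
      calc ∏ k ∈ s, Z k ω ≤ ∏ _k ∈ s, B :=
            Finset.prod_le_prod (fun k _ => (Real.exp_pos _).le) (fun k _ => hω k)
        _ = B ^ s.card := by rw [Finset.prod_const]
  have hindepZ : iIndepFun Z μ :=
    hindep.comp (fun _ x => Real.exp (l * ((q : ℝ) * x - 1)))
      (fun _ => Real.measurable_exp.comp
        (((measurable_id.const_mul _).sub measurable_const).const_mul l))
  have hprodeq : ∀ s : Finset ℕ, ∫ ω, ∏ k ∈ s, Z k ω ∂μ = mg ^ s.card := by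
    classical
    intro s
    induction s using Finset.induction_on with
    | empty => simp
    | @insert j s hj ih =>
      have hind : IndepFun (fun ω => ∏ k ∈ s, Z k ω) (Z j) μ := by
        have h0 := hindepZ.indepFun_finset_prod_of_notMem hZmeas hj
        have heq : (∏ j ∈ s, Z j) = fun ω => ∏ k ∈ s, Z k ω := by
          funext ω; simp [Finset.prod_apply]
        rwa [heq] at h0
      have h2 : ∫ ω, (∏ k ∈ s, Z k ω) * Z j ω ∂μ =
          (∫ ω, ∏ k ∈ s, Z k ω ∂μ) * ∫ ω, Z j ω ∂μ :=
        hind.integral_mul_eq_mul_integral (hprodint s).1 (hZint j).1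
      simp only [Finset.prod_insert hj]
      calc ∫ ω, Z j ω * ∏ k ∈ s, Z k ω ∂μ = ∫ ω, (∏ k ∈ s, Z k ω) * Z j ω ∂μ := by
            congr 1; funext ω; ring
        _ = (∫ ω, ∏ k ∈ s, Z k ω ∂μ) * ∫ ω, Z j ω ∂μ := h2
        _ = mg ^ (insert j s).card := by
            rw [ih, hmgf j, Finset.card_insert_of_notMem hj, pow_succ]
  -- exp of the walk as a product
  have hexpwk : ∀ (s : ℕ) (ω : Ω), Real.exp (wk q X l s ω) = ∏ k ∈ Finset.Icc 1 s, Z k ω := by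
    intro s ω
    rw [wk, Real.exp_sum]
  -- the first-hit decomposition
  set D : ℕ → Set Ω := fun t =>
    {ω | (∀ s, s < t → wk q X l s ω < a) ∧ a ≤ wk q X l t ω} with hDdef
  have hDmeas : ∀ t, MeasurableSet (D t) := by
    intro t
    have : D t = (⋂ s, ⋂ _ : s < t, {ω | wk q X l s ω < a}) ∩ {ω | a ≤ wk q X l t ω} := by
      ext ω; simp [hDdef]
    rw [this]
    exact (MeasurableSet.iInter fun s => MeasurableSet.iInter fun _ =>
      measurableSet_lt (wk_meas q hmeas l s) measurable_const).inter
      (measurableSet_le measurable_const (wk_meas q hmeas l t))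
  have hDdisj : ∀ t t' (_ : t < t') (ω : Ω), ω ∈ D t → ω ∉ D t' := by
    intro t t' htt' ω hωt hωt'
    exact absurd hωt.2 (not_le.2 (hωt'.1 t htt'))
  have hUsub : {ω | ∃ s, s ≤ τ ∧ a ≤ wk q X l s ω} ⊆ ⋃ t ∈ Finset.Icc 1 τ, D t := by
    intro ω hω
    obtain ⟨s, hsτ, hws⟩ := hω
    have hne : {s | a ≤ wk q X l s ω}.Nonempty := ⟨s, hws⟩
    set t₀ := sInf {s | a ≤ wk q X l s ω} with ht₀def
    have ht₀mem : a ≤ wk q X l t₀ ω := Nat.sInf_mem hne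
    have ht₀le : t₀ ≤ s := Nat.sInf_le hws
    have ht₀pos : 1 ≤ t₀ := by
      by_contra h
      push_neg at h
      interval_cases t₀
      · have : wk q X l 0 ω = 0 := by simp [wk]
        rw [this] at ht₀mem; linarith
    refine Set.mem_iUnion₂.2 ⟨t₀, Finset.mem_Icc.2 ⟨ht₀pos, ht₀le.trans hsτ⟩, ?_⟩
    refine ⟨fun s' hs' => ?_, ht₀mem⟩
    exact not_le.1 (fun hc => Nat.notMem_of_lt_sInf hs' hc)
  have hwkint : Integrable (fun ω => Real.exp (wk q X l τ ω)) μ := by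
    have : (fun ω => Real.exp (wk q X l τ ω)) = fun ω => ∏ k ∈ Finset.Icc 1 τ, Z k ω :=
      funext fun ω => hexpwk τ ω
    rw [this]; exact hprodint _
  -- key per-t inequality
  have hkey : ∀ t ∈ Finset.Icc 1 τ, Real.exp a * (μ (D t)).toReal ≤
      ∫ ω, Set.indicator (D t) (fun ω => Real.exp (wk q X l τ ω)) ω ∂μ := by
    intro t ht
    obtain ⟨ht1, htτ⟩ := Finset.mem_Icc.1 ht
    set A1 : Finset ℕ := Finset.Icc 1 t with hA1def
    set A2 : Finset ℕ := Finset.Icc (t + 1) τ with hA2def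
    have hdisjA : Disjoint A1 A2 := by
      rw [Finset.disjoint_left]
      intro k hk1 hk2
      rw [hA1def, Finset.mem_Icc] at hk1
      rw [hA2def, Finset.mem_Icc] at hk2
      omega
    set W : Ω → ℝ := Set.indicator (D t) (fun ω => Real.exp (wk q X l t ω)) with hWdef
    set V : Ω → ℝ := fun ω => ∏ k ∈ A2, Z k ω with hVdef
    have hWmeas : Measurable W :=
      (Real.measurable_exp.comp (wk_meas q hmeas l t)).indicator (hDmeas t)
    have hWint : Integrable W μ := by
      apply Integrable.indicator _ (hDmeas t)
      have : (fun ω => Real.exp (wk q X l t ω)) = fun ω => ∏ k ∈ Finset.Icc 1 t, Z k ω :=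
        funext fun ω => hexpwk t ω
      rw [this]; exact hprodint _
    have hVint : Integrable V μ := hprodint _
    -- independence via restriction to disjoint blocks
    have hsumA1 : ∀ s : ℕ, Measurable fun v : {x // x ∈ A1} → ℝ =>
        ∑ k ∈ Finset.Icc 1 s, (l * ((q : ℝ) * ext A1 v k - 1)) := fun s =>
      Finset.measurable_sum _ fun k _ =>
        (((measurable_ext A1 k).const_mul _).sub measurable_const).const_mul l
    set SA : Set ({x // x ∈ A1} → ℝ) :=
      {v | (∀ s, s < t → (∑ k ∈ Finset.Icc 1 s, (l * ((q : ℝ) * ext A1 v k - 1))) < a) ∧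
        a ≤ ∑ k ∈ Finset.Icc 1 t, (l * ((q : ℝ) * ext A1 v k - 1))} with hSAdef
    have hSAmeas : MeasurableSet SA := by
      have : SA = (⋂ s, ⋂ _ : s < t,
          {v | (∑ k ∈ Finset.Icc 1 s, (l * ((q : ℝ) * ext A1 v k - 1))) < a}) ∩
          {v | a ≤ ∑ k ∈ Finset.Icc 1 t, (l * ((q : ℝ) * ext A1 v k - 1))} := by
        ext v; simp [hSAdef]
      rw [this]
      exact (MeasurableSet.iInter fun s => MeasurableSet.iInter fun _ =>
        measurableSet_lt (hsumA1 s) measurable_const).inter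
        (measurableSet_le measurable_const (hsumA1 t))
    set φ : ({x // x ∈ A1} → ℝ) → ℝ := fun v => Set.indicator SA
      (fun v => Real.exp (∑ k ∈ Finset.Icc 1 t, (l * ((q : ℝ) * ext A1 v k - 1)))) v with hφdef
    have hφmeas : Measurable φ := (Real.measurable_exp.comp (hsumA1 t)).indicator hSAmeas
    set ψ : ({x // x ∈ A2} → ℝ) → ℝ := fun v =>
      ∏ k ∈ A2, Real.exp (l * ((q : ℝ) * ext A2 v k - 1)) with hψdef
    have hψmeas : Measurable ψ := Finset.measurable_prod _ fun k _ =>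
      Real.measurable_exp.comp
        ((((measurable_ext A2 k).const_mul _).sub measurable_const).const_mul l)
    have hkeysum : ∀ (s : ℕ) (ω : Ω), s ≤ t →
        (∑ k ∈ Finset.Icc 1 s,
          (l * ((q : ℝ) * ext A1 (fun j : {x // x ∈ A1} => X j ω) k - 1))) = wk q X l s ω := by
      intro s ω hs
      rw [wk]
      apply Finset.sum_congr rfl
      intro k hk
      rw [ext_restrict A1 X ω]
      rw [Finset.mem_Icc] at hk
      rw [hA1def, Finset.mem_Icc]
      exact ⟨hk.1, hk.2.trans hs⟩
    have hWrepr : W = φ ∘ (fun ω (k : {x // x ∈ A1}) => X k ω) := by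
      funext ω
      simp only [Function.comp_apply, hφdef, hWdef]
      by_cases hmem : ω ∈ D t
      · rw [Set.indicator_of_mem hmem, Set.indicator_of_mem, hkeysum t ω le_rfl]
        rw [hSAdef]
        refine ⟨fun s hs => ?_, ?_⟩
        · rw [hkeysum s ω hs.le]; exact hmem.1 s hs
        · rw [hkeysum t ω le_rfl]; exact hmem.2
      · rw [Set.indicator_of_notMem hmem, Set.indicator_of_notMem]
        intro hc
        rw [hSAdef] at hc
        apply hmem
        refine ⟨fun s hs => ?_, ?_⟩
        · have := hc.1 s hs; rwa [hkeysum s ω hs.le] at this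
        · have := hc.2; rwa [hkeysum t ω le_rfl] at this
    have hVrepr : V = ψ ∘ (fun ω (k : {x // x ∈ A2}) => X k ω) := by
      funext ω
      simp only [Function.comp_apply, hψdef, hVdef, hZdef]
      apply Finset.prod_congr rfl
      intro k hk
      rw [ext_restrict A2 X ω hk]
    have hWV : IndepFun W V μ := by
      rw [hWrepr, hVrepr]
      exact (hindep.indepFun_finset A1 A2 hdisjA hmeas).comp hφmeas hψmeas
    -- the chain of inequalities
    have hVval : ∫ ω, V ω ∂μ = mg ^ A2.card := hprodeq A2
    have hWnonneg : 0 ≤ ∫ ω, W ω ∂μ := by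
      apply integral_nonneg
      intro ω
      rw [hWdef]
      exact Set.indicator_nonneg (fun ω _ => (Real.exp_pos _).le) ω
    have step1 : Real.exp a * (μ (D t)).toReal ≤ ∫ ω, W ω ∂μ := by
      have h1 : ∫ ω, Set.indicator (D t) (fun _ => Real.exp a) ω ∂μ
          = (μ (D t)).toReal • Real.exp a := integral_indicator_const _ (hDmeas t)
      rw [smul_eq_mul, mul_comm] at h1
      rw [← h1]
      apply integral_mono ((integrable_const _).indicator (hDmeas t)) hWint
      intro ω
      by_cases hmem : ω ∈ D t
      · rw [hWdef, Set.indicator_of_mem hmem, Set.indicator_of_mem hmem]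
        exact Real.exp_le_exp.2 hmem.2
      · rw [hWdef, Set.indicator_of_notMem hmem, Set.indicator_of_notMem hmem]
    have step2 : ∫ ω, W ω ∂μ ≤ (∫ ω, W ω ∂μ) * ∫ ω, V ω ∂μ := by
      rw [hVval]
      have hc : (1:ℝ) ≤ mg ^ A2.card := by
        calc (1:ℝ) = 1 ^ A2.card := (one_pow _).symm
          _ ≤ mg ^ A2.card := pow_le_pow_left₀ (by norm_num) hmg1 _
      exact le_mul_of_one_le_right hWnonneg hc
    have step3 : (∫ ω, W ω ∂μ) * ∫ ω, V ω ∂μ = ∫ ω, W ω * V ω ∂μ :=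
      (hWV.integral_mul_eq_mul_integral hWint.1 hVint.1).symm
    have step4 : ∀ ω, W ω * V ω =
        Set.indicator (D t) (fun ω => Real.exp (wk q X l τ ω)) ω := by
      intro ω
      by_cases hmem : ω ∈ D t
      · rw [hWdef, Set.indicator_of_mem hmem, Set.indicator_of_mem hmem]
        simp only [hVdef]
        have hsplit : wk q X l t ω + ∑ k ∈ A2, (l * ((q : ℝ) * X k ω - 1)) = wk q X l τ ω := by
          rw [wk, wk, hA2def]
          rw [show Finset.Icc 1 t = Finset.Ioc 0 t from Finset.Icc_add_one_left_eq_Ioc 0 t,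
            show Finset.Icc (t + 1) τ = Finset.Ioc t τ from Finset.Icc_add_one_left_eq_Ioc t τ,
            show Finset.Icc 1 τ = Finset.Ioc 0 τ from Finset.Icc_add_one_left_eq_Ioc 0 τ]
          exact Finset.sum_Ioc_consecutive _ (Nat.zero_le t) htτ
        have hZprod : ∏ k ∈ A2, Z k ω
            = Real.exp (∑ k ∈ A2, (l * ((q : ℝ) * X k ω - 1))) := by
          rw [Real.exp_sum]
        rw [hZprod, ← Real.exp_add, hsplit]
      · rw [hWdef, Set.indicator_of_notMem hmem, Set.indicator_of_notMem hmem, zero_mul]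
    calc Real.exp a * (μ (D t)).toReal ≤ ∫ ω, W ω ∂μ := step1
      _ ≤ (∫ ω, W ω ∂μ) * ∫ ω, V ω ∂μ := step2
      _ = ∫ ω, W ω * V ω ∂μ := step3
      _ = ∫ ω, Set.indicator (D t) (fun ω => Real.exp (wk q X l τ ω)) ω ∂μ := by
          congr 1; funext ω; exact step4 ω
  
  -- sum up over t
  have hindint : ∀ t, Integrable
      (fun ω => Set.indicator (D t) (fun ω => Real.exp (wk q X l τ ω)) ω) μ :=
    fun t => hwkint.indicator (hDmeas t)
  have hptsum : ∀ ω, (∑ t ∈ Finset.Icc 1 τ,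
      Set.indicator (D t) (fun ω => Real.exp (wk q X l τ ω)) ω) ≤ Real.exp (wk q X l τ ω) := by
    intro ω
    by_cases hex : ∃ t₀ ∈ Finset.Icc 1 τ, ω ∈ D t₀
    · obtain ⟨t₀, ht₀, hωt₀⟩ := hex
      rw [Finset.sum_eq_single t₀]
      · rw [Set.indicator_of_mem hωt₀]
      · intro b _ hb
        apply Set.indicator_of_notMem
        rcases lt_or_gt_of_ne hb with h | h
        · intro hc; exact hDdisj b t₀ h ω hc hωt₀
        · exact hDdisj t₀ b h ω hωt₀
      · intro hc; exact absurd ht₀ hc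
    · push_neg at hex
      rw [Finset.sum_eq_zero fun t ht => Set.indicator_of_notMem (hex t ht) _]
      exact (Real.exp_pos _).le
  have hsumle : ∑ t ∈ Finset.Icc 1 τ,
      (∫ ω, Set.indicator (D t) (fun ω => Real.exp (wk q X l τ ω)) ω ∂μ)
      ≤ ∫ ω, Real.exp (wk q X l τ ω) ∂μ := by
    rw [← integral_finset_sum _ (fun t _ => hindint t)]
    exact integral_mono (integrable_finset_sum _ fun t _ => hindint t) hwkint hptsum
  have hIval : ∫ ω, Real.exp (wk q X l τ ω) ∂μ = mg ^ τ := by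
    have h1 : (fun ω => Real.exp (wk q X l τ ω)) = fun ω => ∏ k ∈ Finset.Icc 1 τ, Z k ω :=
      funext fun ω => hexpwk τ ω
    rw [h1, hprodeq]
    congr 1
    simp [Nat.card_Icc]
  have htotal : Real.exp a * ∑ t ∈ Finset.Icc 1 τ, (μ (D t)).toReal
      ≤ Real.exp ((τ : ℝ) * (l ^ 2 * ((q : ℝ) - 1))) := by
    calc Real.exp a * ∑ t ∈ Finset.Icc 1 τ, (μ (D t)).toReal
        = ∑ t ∈ Finset.Icc 1 τ, Real.exp a * (μ (D t)).toReal := by rw [Finset.mul_sum]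
      _ ≤ ∑ t ∈ Finset.Icc 1 τ,
          (∫ ω, Set.indicator (D t) (fun ω => Real.exp (wk q X l τ ω)) ω ∂μ) :=
          Finset.sum_le_sum hkey
      _ ≤ ∫ ω, Real.exp (wk q X l τ ω) ∂μ := hsumle
      _ = mg ^ τ := hIval
      _ ≤ (Real.exp (l ^ 2 * ((q : ℝ) - 1))) ^ τ :=
          pow_le_pow_left₀ (by linarith) hmg2 τ
      _ = Real.exp ((τ : ℝ) * (l ^ 2 * ((q : ℝ) - 1))) := by
          rw [← Real.exp_nat_mul]
  have hμU : (μ {ω | ∃ s, s ≤ τ ∧ a ≤ wk q X l s ω}).toReal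
      ≤ ∑ t ∈ Finset.Icc 1 τ, (μ (D t)).toReal := by
    have h1 : μ {ω | ∃ s, s ≤ τ ∧ a ≤ wk q X l s ω} ≤ ∑ t ∈ Finset.Icc 1 τ, μ (D t) :=
      (measure_mono hUsub).trans (measure_biUnion_finset_le _ _)
    have h2 : (∑ t ∈ Finset.Icc 1 τ, μ (D t)).toReal
        = ∑ t ∈ Finset.Icc 1 τ, (μ (D t)).toReal :=
      ENNReal.toReal_sum fun t _ => measure_ne_top μ _
    rw [← h2]
    exact ENNReal.toReal_mono (by
      refine (ENNReal.sum_lt_top.2 fun t _ => ?_).ne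
      exact measure_lt_top μ _) h1
  have hfin : Real.exp a * (μ {ω | ∃ s, s ≤ τ ∧ a ≤ wk q X l s ω}).toReal
      ≤ Real.exp ((τ : ℝ) * (l ^ 2 * ((q : ℝ) - 1))) :=
    le_trans (mul_le_mul_of_nonneg_left hμU (Real.exp_pos a).le) htotal
  rw [show -a + (τ : ℝ) * (l ^ 2 * ((q : ℝ) - 1))
      = (τ : ℝ) * (l ^ 2 * ((q : ℝ) - 1)) - a by ring, Real.exp_sub,
    le_div_iff₀ (Real.exp_pos a)]
  calc (μ {ω | ∃ s, s ≤ τ ∧ a ≤ wk q X l s ω}).toReal * Real.exp a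
      = Real.exp a * (μ {ω | ∃ s, s ≤ τ ∧ a ≤ wk q X l s ω}).toReal := by ring
    _ ≤ _ := hfin


lemma conc (q τ : ℕ) (hq : 2 ≤ q) (hτ : 1 ≤ τ) {δ : ℝ} (hδ : 0 < δ) {X : ℕ → Ω → ℝ}
    (hmeas : ∀ k, Measurable (X k))
    (hindep : iIndepFun X μ)
    (hone : ∀ k, μ {ω | X k ω = 1} = ENNReal.ofReal (1 / q))
    (hzero : ∀ k, μ {ω | X k ω = 0} = ENNReal.ofReal (1 - 1 / q)) :
    (μ {ω | ∃ s, s ≤ τ ∧ δ ≤ |∑ k ∈ Finset.Icc 1 s, ((q : ℝ) * X k ω - 1)|}).toReal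
      ≤ 4 * Real.exp (-δ ^ 2 / (2 * τ * q ^ 2)) := by
  have hq1 : (2 : ℝ) ≤ q := by exact_mod_cast hq
  have hq0 : (0 : ℝ) < q := by linarith
  have hqm1 : (0 : ℝ) < (q : ℝ) - 1 := by linarith
  have hτ1 : (1 : ℝ) ≤ τ := by exact_mod_cast hτ
  have hτ0 : (0 : ℝ) < τ := by linarith
  set Bad := {ω | ∃ s, s ≤ τ ∧ δ ≤ |∑ k ∈ Finset.Icc 1 s, ((q : ℝ) * X k ω - 1)|} with hBaddef
  have hwkM : ∀ (l : ℝ) (s : ℕ) (ω : Ω),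
      wk q X l s ω = l * ∑ k ∈ Finset.Icc 1 s, ((q : ℝ) * X k ω - 1) := by
    intro l s ω; rw [wk, Finset.mul_sum]
  have key : ∀ l : ℝ, 0 < l → |l| ≤ 1 / (q : ℝ) →
      -(l * δ) + (τ : ℝ) * (l ^ 2 * ((q : ℝ) - 1)) ≤ -δ ^ 2 / (2 * τ * q ^ 2) →
      (μ Bad).toReal ≤ 4 * Real.exp (-δ ^ 2 / (2 * τ * q ^ 2)) := by
    intro l hl0 hl hexp
    have ha : 0 < l * δ := mul_pos hl0 hδ
    have hup := maximal_chernoff q τ hq hmeas hindep hone hzero ha hl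
    have hl' : |(-l)| ≤ 1 / (q : ℝ) := by rwa [abs_neg]
    have hdn := maximal_chernoff q τ hq hmeas hindep hone hzero ha hl'
    have hsub : Bad ⊆ {ω | ∃ s, s ≤ τ ∧ l * δ ≤ wk q X l s ω} ∪
        {ω | ∃ s, s ≤ τ ∧ l * δ ≤ wk q X (-l) s ω} := by
      intro ω hω
      obtain ⟨s, hs, habs⟩ := hω
      rcases abs_cases (∑ k ∈ Finset.Icc 1 s, ((q : ℝ) * X k ω - 1)) with ⟨heq, _⟩ | ⟨heq, _⟩
      · left
        refine ⟨s, hs, ?_⟩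
        rw [hwkM]
        rw [heq] at habs
        nlinarith
      · right
        refine ⟨s, hs, ?_⟩
        rw [hwkM]
        rw [heq] at habs
        nlinarith
    have h2 : (μ Bad).toReal ≤
        (μ {ω | ∃ s, s ≤ τ ∧ l * δ ≤ wk q X l s ω}).toReal +
        (μ {ω | ∃ s, s ≤ τ ∧ l * δ ≤ wk q X (-l) s ω}).toReal := by
      rw [← ENNReal.toReal_add (measure_ne_top μ _) (measure_ne_top μ _)]
      refine ENNReal.toReal_mono
        (ENNReal.add_ne_top.2 ⟨measure_ne_top μ _, measure_ne_top μ _⟩) ?_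
      exact (measure_mono hsub).trans (measure_union_le _ _)
    have hexp1 : Real.exp (-(l * δ) + (τ : ℝ) * (l ^ 2 * ((q : ℝ) - 1)))
        ≤ Real.exp (-δ ^ 2 / (2 * τ * q ^ 2)) := Real.exp_le_exp.2 hexp
    have hexp2 : Real.exp (-(l * δ) + (τ : ℝ) * ((-l) ^ 2 * ((q : ℝ) - 1)))
        ≤ Real.exp (-δ ^ 2 / (2 * τ * q ^ 2)) := by rw [neg_sq]; exact hexp1
    have := add_le_add (hup.trans hexp1) (hdn.trans hexp2)
    linarith [h2, Real.exp_pos (-δ ^ 2 / (2 * τ * q ^ 2))]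
  rcases le_or_gt δ ((q : ℝ) * τ) with hcs | hcs
  · rcases le_or_gt (δ / (2 * τ * ((q : ℝ) - 1))) (1 / (q : ℝ)) with hll | hll
    · have hden : (0 : ℝ) < 2 * τ * ((q : ℝ) - 1) := by positivity
      have hl0 : 0 < δ / (2 * τ * ((q : ℝ) - 1)) := div_pos hδ hden
      apply key (δ / (2 * τ * ((q : ℝ) - 1))) hl0 (by rwa [abs_of_pos hl0])
      have hid : -(δ / (2 * τ * ((q : ℝ) - 1)) * δ)
          + (τ : ℝ) * ((δ / (2 * τ * ((q : ℝ) - 1))) ^ 2 * ((q : ℝ) - 1))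
          = -(δ ^ 2 / (4 * τ * ((q : ℝ) - 1))) := by
        field_simp
        ring
      rw [hid, neg_div]
      have hle : δ ^ 2 / (2 * τ * q ^ 2) ≤ δ ^ 2 / (4 * τ * ((q : ℝ) - 1)) := by
        apply div_le_div_of_nonneg_left (by positivity) (by positivity)
        nlinarith
      linarith
    · apply key (1 / (q : ℝ)) (by positivity) (le_of_eq (abs_of_pos (by positivity)))
      have h1 : 2 * τ * ((q : ℝ) - 1) < δ * q := by
        have hden : (0 : ℝ) < 2 * τ * ((q : ℝ) - 1) := by positivity
        rw [div_lt_div_iff₀ hq0 hden] at hll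
        linarith
      rw [neg_div]
      have hgoal : δ ^ 2 / (2 * τ * q ^ 2)
          ≤ 1 / (q:ℝ) * δ - (τ:ℝ) * ((1 / (q:ℝ)) ^ 2 * ((q:ℝ) - 1)) := by
        rw [div_le_iff₀ (by positivity : (0:ℝ) < 2 * (τ:ℝ) * (q:ℝ) ^ 2)]
        have e1 : (1 / (q:ℝ) * δ - (τ:ℝ) * ((1 / (q:ℝ)) ^ 2 * ((q:ℝ) - 1))) * (2 * τ * q ^ 2)
            = 2 * τ * δ * q - 2 * τ ^ 2 * ((q:ℝ) - 1) := by
          field_simp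
        rw [e1]
        nlinarith [mul_lt_mul_of_pos_left h1 hτ0, mul_le_mul_of_nonneg_left hcs hδ.le]
      linarith
  · have hae : ∀ᵐ ω ∂μ, ∀ k, X k ω = 1 ∨ X k ω = 0 :=
      ae_all_iff.2 fun k => ae_two_point (hmeas k) (by positivity)
        (by rw [div_le_one hq0]; linarith) (hone k) (hzero k)
    have hBad0 : μ Bad = 0 := by
      apply measure_mono_null _ (ae_iff.1 hae)
      intro ω hω
      simp only [Set.mem_setOf_eq]
      intro hgood
      obtain ⟨s, hs, habs⟩ := hω
      have hb : |∑ k ∈ Finset.Icc 1 s, ((q : ℝ) * X k ω - 1)| ≤ (s : ℝ) * ((q : ℝ) - 1) := by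
        calc |∑ k ∈ Finset.Icc 1 s, ((q : ℝ) * X k ω - 1)|
            ≤ ∑ k ∈ Finset.Icc 1 s, |(q : ℝ) * X k ω - 1| :=
              Finset.abs_sum_le_sum_abs _ _
          _ ≤ ∑ _k ∈ Finset.Icc 1 s, ((q : ℝ) - 1) := by
              apply Finset.sum_le_sum
              intro k _
              rcases hgood k with h | h <;> rw [h]
              · rw [mul_one, abs_of_nonneg (by linarith)]
              · rw [mul_zero, zero_sub, abs_neg, abs_one]
                linarith
          _ = (s : ℝ) * ((q : ℝ) - 1) := by
              rw [Finset.sum_const, Nat.card_Icc]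
              simp [nsmul_eq_mul]
      have hs' : (s : ℝ) ≤ τ := by exact_mod_cast hs
      have h3 : (s : ℝ) * ((q : ℝ) - 1) ≤ (τ : ℝ) * ((q : ℝ) - 1) :=
        mul_le_mul_of_nonneg_right hs' (by linarith)
      nlinarith
    rw [hBad0]
    simp only [ENNReal.toReal_zero]
    positivity

end Stmt7Aux

open Stmt7Aux in
/-- Probabilistic core of Proposition 2 ('Ends of the walk'): for the interpolation walk
`C_s = q E^s + (τ - s)` with `E^s = Σ_{k=1}^s X_k`, `X_k` i.i.d. Bernoulli(1/q), stopped at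
the first `s` with `|C_s - τ| ≥ δ` (and `T = τ` if no such `s ≤ τ - 1` exists), one has
`𝔼|E^{τ∧T} - ⌊S/q⌋| + 𝔼[(τ-T) 1_{T<τ}] ≤ 6 S exp(-δ²/(2τq²)) + 3δ/q + 2`,
where `S = τ + 2δ`. -/
theorem stmt_7 {Ω : Type*} [MeasurableSpace Ω] (μ : Measure Ω) [IsProbabilityMeasure μ]
    (q τ : ℕ) (hq : 2 ≤ q) (hτ : 1 ≤ τ) (δ : ℝ) (hδ : 0 < δ)
    (X : ℕ → Ω → ℝ)
    (hmeas : ∀ k, Measurable (X k))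
    (hindep : iIndepFun X μ)
    (hone : ∀ k, μ {ω | X k ω = 1} = ENNReal.ofReal (1 / q))
    (hzero : ∀ k, μ {ω | X k ω = 0} = ENNReal.ofReal (1 - 1 / q)) :
    let S : ℝ := τ + 2 * δ
    let E : ℕ → Ω → ℝ := fun s ω => ∑ k ∈ Finset.Icc 1 s, X k ω
    let C : ℕ → Ω → ℝ := fun s ω => q * E s ω + ((τ : ℝ) - s)
    let T : Ω → ℕ := fun ω => sInf ({s | δ ≤ |C s ω - τ|} ∪ {τ})
    (∫ ω, |E (min τ (T ω)) ω - (⌊S / q⌋ : ℝ)| ∂μ)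
      + (∫ ω, (if T ω < τ then ((τ : ℝ) - T ω) else 0) ∂μ)
    ≤ 6 * S * Real.exp (-δ ^ 2 / (2 * τ * q ^ 2)) + 3 * δ / q + 2 := by
  intro S E C T
  classical
  have hq2 : (2 : ℝ) ≤ q := by exact_mod_cast hq
  have hq0 : (0 : ℝ) < q := by linarith
  have hτ1 : (1 : ℝ) ≤ τ := by exact_mod_cast hτ
  have hτ0 : (0 : ℝ) < τ := by linarith
  have hS : S = (τ : ℝ) + 2 * δ := rfl
  have hS0 : 0 < S := by rw [hS]; linarith
  -- the centered walk
  have hMC : ∀ s (ω : Ω), C s ω - τ = ∑ k ∈ Finset.Icc 1 s, ((q : ℝ) * X k ω - 1) := by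
    intro s ω
    have h1 : ∑ k ∈ Finset.Icc 1 s, ((q : ℝ) * X k ω - 1)
        = (q : ℝ) * (∑ k ∈ Finset.Icc 1 s, X k ω) - s := by
      rw [Finset.sum_sub_distrib, ← Finset.mul_sum, Finset.sum_const, Nat.card_Icc]
      simp
    rw [h1]
    show (q : ℝ) * (∑ k ∈ Finset.Icc 1 s, X k ω) + ((τ : ℝ) - s) - τ
      = (q : ℝ) * (∑ k ∈ Finset.Icc 1 s, X k ω) - s
    ring
  have hEmeas : ∀ s, Measurable (fun ω => E s ω) := fun s =>
    Finset.measurable_sum _ fun k _ => hmeas k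
  have hCmeas : ∀ s, Measurable (fun ω => C s ω) := fun s =>
    ((hEmeas s).const_mul _).add_const _
  -- basic properties of T
  have hTle : ∀ ω, T ω ≤ τ := fun ω =>
    Nat.sInf_le (Set.mem_union_right _ rfl)
  have hTmem : ∀ ω, T ω ∈ {s | δ ≤ |C s ω - (τ : ℝ)|} ∪ {τ} := fun ω =>
    Nat.sInf_mem ⟨τ, Set.mem_union_right _ rfl⟩
  have hmin : ∀ ω, min τ (T ω) = T ω := fun ω => min_eq_right (hTle ω)
  have hpiece : ∀ m : ℕ, MeasurableSet {ω | δ ≤ |C m ω - (τ : ℝ)| ∨ m = τ} := by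
    intro m
    by_cases hm : m = τ
    · have : {ω | δ ≤ |C m ω - (τ : ℝ)| ∨ m = τ} = Set.univ := by
        ext ω; simp [hm]
      rw [this]; exact MeasurableSet.univ
    · have : {ω | δ ≤ |C m ω - (τ : ℝ)| ∨ m = τ} = {ω | δ ≤ |C m ω - (τ : ℝ)|} := by
        ext ω; simp [hm]
      rw [this]
      exact measurableSet_le measurable_const ((hCmeas m).sub_const _).abs
  have hTmeas : Measurable T := by
    apply measurable_to_countable'
    intro n
    have hchar : T ⁻¹' {n} = {ω | δ ≤ |C n ω - (τ : ℝ)| ∨ n = τ} ∩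
        (⋂ m, ⋂ _ : m < n, {ω | δ ≤ |C m ω - (τ : ℝ)| ∨ m = τ}ᶜ) := by
      ext ω
      simp only [Set.mem_preimage, Set.mem_singleton_iff, Set.mem_inter_iff, Set.mem_setOf_eq,
        Set.mem_iInter, Set.mem_compl_iff]
      constructor
      · intro h
        refine ⟨?_, ?_⟩
        · have h1 := hTmem ω
          rw [h] at h1
          rcases h1 with h1 | h1
          · exact Or.inl h1
          · exact Or.inr h1
        · intro m hm hcon
          have hlt : m < sInf ({s | δ ≤ |C s ω - (τ : ℝ)|} ∪ {τ}) := by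
            show m < T ω
            omega
          have := Nat.notMem_of_lt_sInf hlt
          rcases hcon with hcon | hcon
          · exact this (Set.mem_union_left _ hcon)
          · exact this (Set.mem_union_right _ hcon)
      · rintro ⟨h1, h2⟩
        refine le_antisymm ?_ ?_
        · apply Nat.sInf_le
          rcases h1 with h1 | h1
          · exact Set.mem_union_left _ h1
          · exact Set.mem_union_right _ h1
        · by_contra hcon
          push_neg at hcon
          have h3 := h2 (T ω) hcon
          rcases hTmem ω with h4 | h4
          · exact h3 (Or.inl h4)
          · exact h3 (Or.inr h4)
    rw [hchar]
    exact (hpiece n).inter (MeasurableSet.iInter fun m =>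
      MeasurableSet.iInter fun _ => (hpiece m).compl)
  -- floor constant
  set c : ℝ := ((⌊S / (q : ℝ)⌋ : ℤ) : ℝ) with hcdef
  have hc0 : 0 ≤ c := by
    have h0 : (0 : ℤ) ≤ ⌊S / (q : ℝ)⌋ := Int.floor_nonneg.2 (by positivity)
    rw [hcdef]
    exact_mod_cast h0
  have hcle : c ≤ S / q := Int.floor_le _
  have hclt : S / q < c + 1 := Int.lt_floor_add_one _
  -- concentration
  have hconc := conc (μ := μ) q τ hq hτ hδ hmeas hindep hone hzero
  set Bad := {ω | ∃ s, s ≤ τ ∧ δ ≤ |∑ k ∈ Finset.Icc 1 s, ((q : ℝ) * X k ω - 1)|} with hBaddef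
  have hBadMeas : MeasurableSet Bad := by
    have : Bad = ⋃ s, ⋃ _ : s ≤ τ,
        {ω | δ ≤ |∑ k ∈ Finset.Icc 1 s, ((q : ℝ) * X k ω - 1)|} := by
      ext ω; simp [hBaddef]
    rw [this]
    exact MeasurableSet.iUnion fun s => MeasurableSet.iUnion fun _ =>
      measurableSet_le measurable_const
        (Finset.measurable_sum _ fun k _ => ((hmeas k).const_mul _).sub_const _).abs
  have hae : ∀ᵐ ω ∂μ, ∀ k, X k ω = 1 ∨ X k ω = 0 :=
    ae_all_iff.2 fun k => ae_two_point (hmeas k) (by positivity)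
      ((div_le_one hq0).2 (by linarith)) (hone k) (hzero k)
  have hEbound : ∀ ω, (∀ k, X k ω = 1 ∨ X k ω = 0) → ∀ s, 0 ≤ E s ω ∧ E s ω ≤ (s : ℝ) := by
    intro ω hω s
    constructor
    · refine Finset.sum_nonneg fun k _ => ?_
      rcases hω k with h | h <;> rw [h] <;> norm_num
    · calc E s ω ≤ ∑ _k ∈ Finset.Icc 1 s, (1 : ℝ) := by
            refine Finset.sum_le_sum fun k _ => ?_
            rcases hω k with h | h <;> rw [h] <;> norm_num
        _ = (s : ℝ) := by rw [Finset.sum_const, Nat.card_Icc]; simp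
  have hτS : (τ : ℝ) ≤ S := by rw [hS]; linarith
  have hSq : S / q ≤ S / 2 := div_le_div_of_nonneg_left hS0.le (by norm_num) hq2
  -- pointwise bound
  have hbound : ∀ ω, (∀ k, X k ω = 1 ∨ X k ω = 0) →
      |E (min τ (T ω)) ω - c| + (if T ω < τ then ((τ : ℝ) - T ω) else 0)
        ≤ Bad.indicator (fun _ => 3 / 2 * S) ω + Badᶜ.indicator (fun _ => 3 * δ / q + 1) ω := by
    intro ω hω
    rw [hmin ω]
    have hE := hEbound ω hω
    by_cases hmem : ω ∈ Bad
    · rw [Set.indicator_of_mem hmem, Set.indicator_of_notMem (by simp [hmem])]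
      have hf1b : |E (T ω) ω - c| ≤ (T ω : ℝ) + S / q := by
        refine (abs_sub_le_max (hE (T ω)).1 hc0).trans (max_le ?_ ?_)
        · exact (hE (T ω)).2.trans (le_add_of_nonneg_right (by positivity))
        · exact hcle.trans (le_add_of_nonneg_left (Nat.cast_nonneg _))
      have hTcast : (T ω : ℝ) ≤ τ := by exact_mod_cast hTle ω
      by_cases hT : T ω < τ
      · rw [if_pos hT]
        linarith
      · rw [if_neg hT]
        linarith
    · rw [Set.indicator_of_notMem hmem, Set.indicator_of_mem (by simp [hmem])]
      have hnb : ∀ s, s ≤ τ → ¬ (δ ≤ |C s ω - (τ : ℝ)|) := by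
        intro s hs hcon
        rw [hMC s ω] at hcon
        exact hmem ⟨s, hs, hcon⟩
      have hTτ : T ω = τ := by
        refine le_antisymm (hTle ω) (not_lt.1 fun hlt => ?_)
        rcases hTmem ω with h1 | h1
        · exact hnb (T ω) (hTle ω) h1
        · rw [Set.mem_singleton_iff] at h1
          omega
      rw [hTτ, if_neg (lt_irrefl τ), add_zero]
      have hM := not_le.1 (hnb τ le_rfl)
      have hMval : C τ ω - τ = (q : ℝ) * E τ ω - τ := by
        show (q : ℝ) * E τ ω + ((τ : ℝ) - τ) - τ = (q : ℝ) * E τ ω - τ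
        ring
      rw [hMval, abs_lt] at hM
      have hqc1 : c * q ≤ S := (le_div_iff₀ hq0).1 hcle
      have hqc2 : S < (c + 1) * q := (div_lt_iff₀ hq0).1 hclt
      rw [hS] at hqc1 hqc2
      have key2 : |(E τ ω - c) * q| ≤ 3 * δ + q := by
        rw [abs_le]
        constructor
        · nlinarith [hM.1, hM.2]
        · nlinarith [hM.1, hM.2]
      have hq_abs : |E τ ω - c| * q ≤ 3 * δ + q := by
        calc |E τ ω - c| * q = |E τ ω - c| * |(q : ℝ)| := by rw [abs_of_pos hq0]
          _ = |(E τ ω - c) * q| := (abs_mul _ _).symm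
          _ ≤ 3 * δ + q := key2
      have final : |E τ ω - c| ≤ 3 * δ / q + 1 := by
        rw [show 3 * δ / (q : ℝ) + 1 = (3 * δ + q) / q by field_simp, le_div_iff₀ hq0]
        exact hq_abs
      linarith
  -- integrability
  have hf1meas : Measurable (fun ω => |E (min τ (T ω)) ω - c|) := by
    have h1 : Measurable fun ω => E (min τ (T ω)) ω :=
      measurable_comp_nat hTmeas (fun n => hEmeas (min τ n))
    exact (h1.sub measurable_const).abs
  have hf1int : Integrable (fun ω => |E (min τ (T ω)) ω - c|) μ := by
    apply Integrable.mono' (integrable_const ((τ : ℝ) + S / q)) hf1meas.aestronglyMeasurable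
    filter_upwards [hae] with ω hω
    rw [Real.norm_eq_abs, abs_abs, hmin ω]
    have hE := hEbound ω hω
    have hTcast : (T ω : ℝ) ≤ τ := by exact_mod_cast hTle ω
    refine (abs_sub_le_max (hE (T ω)).1 hc0).trans (max_le ?_ ?_)
    · have := (hE (T ω)).2
      have hSq0 : (0:ℝ) ≤ S / q := by positivity
      linarith
    · have : (0:ℝ) ≤ (τ : ℝ) := hτ0.le
      linarith
  have hf2meas : Measurable (fun ω => if T ω < τ then ((τ : ℝ) - T ω) else 0) :=
    measurable_comp_nat (F := fun n _ => if n < τ then ((τ : ℝ) - n) else 0) hTmeas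
      (fun _ => measurable_const)
  have hf2int : Integrable (fun ω => if T ω < τ then ((τ : ℝ) - T ω) else 0) μ := by
    apply Integrable.mono' (integrable_const (τ : ℝ)) hf2meas.aestronglyMeasurable
    refine Filter.Eventually.of_forall fun ω => ?_
    rw [Real.norm_eq_abs]
    by_cases hT : T ω < τ
    · rw [if_pos hT, abs_of_nonneg (by
        have : (T ω : ℝ) ≤ τ := by exact_mod_cast hTle ω
        linarith)]
      have : (0:ℝ) ≤ (T ω : ℝ) := Nat.cast_nonneg _
      linarith
    · rw [if_neg hT, abs_zero]
      linarith
  have hind1 : Integrable (Bad.indicator (fun _ => 3 / 2 * S)) μ :=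
    (integrable_const _).indicator hBadMeas
  have hind2 : Integrable (Badᶜ.indicator (fun _ => 3 * δ / q + 1)) μ :=
    (integrable_const _).indicator hBadMeas.compl
  have hcompl1 : (μ Badᶜ).toReal ≤ 1 := by
    have h := prob_le_one (μ := μ) (s := Badᶜ)
    have h2 := ENNReal.toReal_mono ENNReal.one_ne_top h
    simpa using h2
  calc (∫ ω, |E (min τ (T ω)) ω - c| ∂μ)
        + (∫ ω, (if T ω < τ then ((τ : ℝ) - T ω) else 0) ∂μ)
      = ∫ ω, (|E (min τ (T ω)) ω - c|
          + (if T ω < τ then ((τ : ℝ) - T ω) else 0)) ∂μ :=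
        (integral_add hf1int hf2int).symm
    _ ≤ ∫ ω, (Bad.indicator (fun _ => 3 / 2 * S) ω
          + Badᶜ.indicator (fun _ => 3 * δ / q + 1) ω) ∂μ := by
        refine integral_mono_ae (hf1int.add hf2int) (hind1.add hind2) ?_
        filter_upwards [hae] with ω hω
        exact hbound ω hω
    _ = 3 / 2 * S * (μ Bad).toReal + (3 * δ / q + 1) * (μ Badᶜ).toReal := by
        rw [integral_add hind1 hind2, integral_indicator_const _ hBadMeas,
          integral_indicator_const _ hBadMeas.compl, smul_eq_mul, smul_eq_mul,
            measureReal_def, measureReal_def]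
        ring
    _ ≤ 3 / 2 * S * (4 * Real.exp (-δ ^ 2 / (2 * τ * q ^ 2))) + (3 * δ / q + 1) * 1 := by
        have h3 : (0:ℝ) ≤ 3 / 2 * S := by linarith
        have h4 : (0:ℝ) ≤ 3 * δ / q + 1 := by positivity
        exact add_le_add (mul_le_mul_of_nonneg_left hconc h3)
          (mul_le_mul_of_nonneg_left hcompl1 h4)
    _ ≤ 6 * S * Real.exp (-δ ^ 2 / (2 * τ * q ^ 2)) + 3 * δ / q + 2 := by
        nlinarith [Real.exp_pos (-δ ^ 2 / (2 * τ * q ^ 2))]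
end

section
/- Let d ≥ 2 be an integer and β ≥ 1 a real number. Then the equation (β−1)·(1−q)^d + (1−q)^{d−1} + (1−q) − 1 = 0 has exactly one solution q in the open interval (0, 1); moreover, for every q ∈ (0,1), this equation holds if and only if β = q/(1−q)^d − q/(1−q). -/
/-- In the 1-RSB analysis of the hard-core model on random `d`-regular graphs, for `d ≥ 2`
and `β ≥ 1`, the stationarity equation `(β-1)(1-q)^d + (1-q)^{d-1} + (1-q) - 1 = 0` has a
unique solution `q ∈ (0,1)`; moreover, for `q ∈ (0,1)` the equation is equivalent to
`β = q/(1-q)^d - q/(1-q)`. -/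
theorem stmt_10 (d : ℕ) (hd : 2 ≤ d) (β : ℝ) (hβ : 1 ≤ β) :
    (∃! q : ℝ, q ∈ Set.Ioo (0 : ℝ) 1 ∧
        (β - 1) * (1 - q) ^ d + (1 - q) ^ (d - 1) + (1 - q) - 1 = 0) ∧
    (∀ q ∈ Set.Ioo (0 : ℝ) 1,
        ((β - 1) * (1 - q) ^ d + (1 - q) ^ (d - 1) + (1 - q) - 1 = 0
          ↔ β = q / (1 - q) ^ d - q / (1 - q))) := by
  set F : ℝ → ℝ := fun q => (β - 1) * (1 - q) ^ d + (1 - q) ^ (d - 1) + (1 - q) - 1 with hF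
  have hd0 : d ≠ 0 := by omega
  have hd1 : d - 1 ≠ 0 := by omega
  have hcont : ContinuousOn F (Set.Icc (0:ℝ) 1) := by fun_prop
  have hF0 : F 0 = β := by simp [hF]
  have hF1 : F 1 = -1 := by simp [hF, zero_pow hd0, zero_pow hd1]
  have hanti : StrictAntiOn F (Set.Icc (0:ℝ) 1) := by
    intro a ha b hb hab
    simp only [hF]
    have h1 : (0:ℝ) ≤ 1 - b := by linarith [hb.2]
    have h2 : 1 - b < 1 - a := by linarith
    have h3 : (0:ℝ) ≤ β - 1 := by linarith
    have e1 : (1-b)^d ≤ (1-a)^d := pow_le_pow_left₀ h1 h2.le d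
    have e2 : (1-b)^(d-1) ≤ (1-a)^(d-1) := pow_le_pow_left₀ h1 h2.le _
    have e3 := mul_le_mul_of_nonneg_left e1 h3
    linarith
  have hmem : (0:ℝ) ∈ Set.Ioo (F 1) (F 0) := by
    rw [hF0, hF1]; constructor <;> linarith
  obtain ⟨q, hq, hFq⟩ := intermediate_value_Ioo' (by norm_num : (0:ℝ) ≤ 1) hcont hmem
  have hsub : Set.Ioo (0:ℝ) 1 ⊆ Set.Icc (0:ℝ) 1 := Set.Ioo_subset_Icc_self
  constructor
  · refine ⟨q, ⟨hq, hFq⟩, ?_⟩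
    intro y ⟨hy, hFy⟩
    exact hanti.injOn (hsub hy) (hsub hq) (hFy.trans hFq.symm)
  · intro q hq
    have hne : (1 - q) ≠ 0 := by have := hq.2; intro h; linarith [sub_eq_zero.mp h]
    have hdne : (1 - q) ^ d ≠ 0 := pow_ne_zero _ hne
    have hpow : (1 - q) ^ d = (1 - q) ^ (d - 1) * (1 - q) := by
      rw [← pow_succ]; congr 1; omega
    rw [div_sub_div _ _ hdne hne, eq_div_iff (mul_ne_zero hdne hne)]
    constructor
    · intro h
      linear_combination (1 - q) * h + hpow
    · intro h
      have hE : (1 - q) * ((β - 1) * (1 - q) ^ d + (1 - q) ^ (d - 1) + (1 - q) - 1) = 0 := by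
        linear_combination h - hpow
      rcases mul_eq_zero.mp hE with h' | h'
      · exact absurd h' hne
      · exact h'
end
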